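/- Let P be a finite graded poset of rank r, let g be a positive labeling of P, and let a₀, …, a_r be positive reals. Then BAR((a₀, a₁, …, a_r) ♭ g) = (1/(a₀a₁⋯a_r), a₀, a₁, …, a_{r-2}, a_{r-1}) ♭ BAR(g). -/

import Mathlib

/-!
Birational (commutative) antichain/order rowmotion on a finite poset `P`, with labels in `ℝ`
and positive labelings, following Joseph–Roby, "Birational and noncommutative lifts of
antichain toggling and rowmotion".
-/

open Finset

attribute [local instance] Classical.propDecidable

variable {P : Type*} [Fintype P] [PartialOrder P]

/-- `c` is a saturated chain in `P`: consecutive entries are covers. -/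
def SatChain {P : Type*} [PartialOrder P] {k : ℕ} (c : Fin (k + 1) → P) : Prop :=
  ∀ i : Fin k, c i.castSucc ⋖ c i.succ

/-- `c` is a maximal chain of `P`: a saturated chain from a minimal element to a maximal
element of `P` (equivalently, the restriction to `P` of a maximal chain
`0̂ ⋖ y₁ ⋖ ⋯ ⋖ y_k ⋖ 1̂` of `P̂`). -/
def MaxChain {P : Type*} [PartialOrder P] {k : ℕ} (c : Fin (k + 1) → P) : Prop :=
  SatChain c ∧ IsMin (c 0) ∧ IsMax (c (Fin.last k))

/-- `Υ_v(g)`: the sum over all maximal chains `(y₁, …, y_k)` of `P` through `v` of the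
products `g(y₁)⋯g(y_k)` of the labels along the chain. -/
noncomputable def Upsilon (g : P → ℝ) (v : P) : ℝ :=
  ∑ k ∈ range (Fintype.card P),
    ∑ c ∈ univ.filter (fun c : Fin (k + 1) → P => MaxChain c ∧ ∃ j, c j = v),
      (List.ofFn (g ∘ c)).prod

/-- The birational antichain toggle `τ_v`: it replaces the label at `v` by `C / Υ_v(g)` and
fixes all other labels. -/
noncomputable def atog (C : ℝ) (v : P) (g : P → ℝ) : P → ℝ :=
  fun x => if x = v then C / Upsilon g v else g x

/-- `∑_{y ∈ P̂, y ⋖ x} f(y)`, with the convention `f(0̂) = 1` (the unique lower cover in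
`P̂` of a minimal element of `P` is `0̂`). -/
noncomputable def lowSum (f : P → ℝ) (x : P) : ℝ :=
  (if IsMin x then 1 else 0) + ∑ y ∈ univ.filter (fun y => y ⋖ x), f y

/-- `∑_{y ∈ P̂, y ⋗ x} 1/f(y)`, with the convention `f(1̂) = C`. -/
noncomputable def upInvSum (C : ℝ) (f : P → ℝ) (x : P) : ℝ :=
  (if IsMax x then 1 / C else 0) + ∑ y ∈ univ.filter (fun y => x ⋖ y), 1 / f y

/-- The birational order toggle `T_v`: it replaces the label at `v` by
`(∑_{y ∈ P̂, y ⋖ v} f(y)) / (f(v) · ∑_{y ∈ P̂, y ⋗ v} 1/f(y))` (with `f(0̂) = 1`,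
`f(1̂) = C`) and fixes all other labels. -/
noncomputable def otog (C : ℝ) (v : P) (f : P → ℝ) : P → ℝ :=
  fun x => if x = v then lowSum f v / (f v * upInvSum C f v) else f x

/-- The birational complement map `Θ`: `(Θf)(x) = C / f(x)`. -/
noncomputable def thetaMap (C : ℝ) (f : P → ℝ) : P → ℝ := fun x => C / f x

/-- The birational down transfer `∇`: `(∇f)(x) = f(x) / ∑_{y ∈ P̂, y ⋖ x} f(y)` with
`f(0̂) = 1`. -/
noncomputable def nablaMap (f : P → ℝ) : P → ℝ := fun x => f x / lowSum f x

/-- The birational inverse up transfer `Δ⁻¹`: `(Δ⁻¹f)(x)` is the sum, over all saturated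
chains `x = y₁ ⋖ y₂ ⋖ ⋯ ⋖ y_k ⋖ 1̂` in `P̂` (i.e. saturated chains of `P` starting at `x`
and ending at a maximal element of `P`), of `f(y₁)f(y₂)⋯f(y_k)`. -/
noncomputable def deltaInvMap (f : P → ℝ) : P → ℝ := fun x =>
  ∑ k ∈ range (Fintype.card P),
    ∑ c ∈ univ.filter (fun c : Fin (k + 1) → P =>
        SatChain c ∧ c 0 = x ∧ IsMax (c (Fin.last k))),
      (List.ofFn (f ∘ c)).prod

/-- `l` is a linear extension of `P`: it lists every element of `P` exactly once, and
`l[i] < l[j]` in `P` implies `i < j`. -/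
def IsLinearExtension {P : Type*} [PartialOrder P] (l : List P) : Prop :=
  l.Nodup ∧ (∀ x : P, x ∈ l) ∧
    ∀ (i j : ℕ) (hi : i < l.length) (hj : j < l.length), l[i]'hi < l[j]'hj → i < j

/-- `l` is a linear extension of the subposet `A` of `P`. -/
def IsLinearExtensionOn {P : Type*} [PartialOrder P] (A : Set P) (l : List P) : Prop :=
  l.Nodup ∧ (∀ x : P, x ∈ l ↔ x ∈ A) ∧
    ∀ (i j : ℕ) (hi : i < l.length) (hj : j < l.length), l[i]'hi < l[j]'hj → i < j

/-- Apply the antichain toggles `τ` along the list `l`, first element of `l` first; for a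
linear extension `l = (x₁,…,xₙ)` this is `τ_{xₙ} ∘ ⋯ ∘ τ_{x₂} ∘ τ_{x₁}`, i.e. birational
antichain rowmotion `BAR`. -/
noncomputable def applyATogs (C : ℝ) (l : List P) (g : P → ℝ) : P → ℝ :=
  l.foldl (fun h v => atog C v h) g

/-- Apply the order toggles `T` along the list `l`, first element of `l` first. -/
noncomputable def applyOTogs (C : ℝ) (l : List P) (f : P → ℝ) : P → ℝ :=
  l.foldl (fun h v => otog C v h) f

/-- `rk` is a rank function exhibiting `P` as a graded poset of rank `r`: minimal elements
have rank `0`, ranks increase by `1` along covers, and maximal elements have rank `r`. -/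
def IsRankFunction {P : Type*} [PartialOrder P] (rk : P → ℕ) (r : ℕ) : Prop :=
  (∀ x : P, IsMin x → rk x = 0) ∧ (∀ x y : P, x ⋖ y → rk y = rk x + 1) ∧
    (∀ x : P, IsMax x → rk x = r)

/-!
Toggling `v` replaces its label by `C / Υ_v`, and `Υ_v` is a sum of products over maximal chains,
each of which meets every rank `0, …, r` exactly once. Toggle along the linear extension and
suppose the elements already toggled carry the weights `b = (1/(a₀⋯a_r), a₀, …, a_{r-1})`
while the others still carry `a`. Every maximal chain through `v` then picks up the weight
`b₀⋯b_{k-1} a_k⋯a_r = 1/b_k` with `k = rk v`, because the elements below `v` have been toggled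
and `v` and those above it have not. So the toggle at `v` multiplies the new label by `b_k`,
which keeps the invariant.
-/

theorem SatChain.strictMono {P : Type*} [PartialOrder P] {k : ℕ} {c : Fin (k + 1) → P}
    (hc : SatChain c) : StrictMono c :=
  Fin.strictMono_iff_lt_succ.mpr fun i => (hc i).lt

theorem MaxChain.rk_apply {P : Type*} [PartialOrder P] {rk : P → ℕ} {r k : ℕ}
    (hrk : IsRankFunction rk r) {c : Fin (k + 1) → P} (hc : MaxChain c) (i : Fin (k + 1)) :
    rk (c i) = i := by
  induction i using Fin.induction with
  | zero => exact hrk.1 _ hc.2.1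
  | succ i ih => rw [hrk.2.1 _ _ (hc.1 i), ih, Fin.val_succ, Fin.val_castSucc]

theorem MaxChain.length_eq {P : Type*} [PartialOrder P] {rk : P → ℕ} {r k : ℕ}
    (hrk : IsRankFunction rk r) {c : Fin (k + 1) → P} (hc : MaxChain c) : k = r := by
  simpa [hrk.2.2 _ hc.2.2] using (hc.rk_apply hrk (Fin.last k)).symm

theorem MaxChain.prod_comp_rk {P : Type*} [PartialOrder P] {rk : P → ℕ} {r k : ℕ}
    (hrk : IsRankFunction rk r) {c : Fin (k + 1) → P} (hc : MaxChain c) (w : ℕ → ℝ) :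
    ∏ i, w (rk (c i)) = ∏ j ∈ range (r + 1), w j := by
  obtain rfl := hc.length_eq hrk
  simp only [hc.rk_apply hrk, Fin.prod_univ_eq_prod_range (fun j => w j)]

theorem Upsilon_mul_of_prod_eq {s f : P → ℝ} {v : P} {κ : ℝ}
    (hs : ∀ k (c : Fin (k + 1) → P), MaxChain c → (∃ j, c j = v) → ∏ i, s (c i) = κ) :
    Upsilon (s * f) v = κ * Upsilon f v := by
  simp only [Upsilon, mul_sum, Function.comp_def, List.prod_ofFn, Pi.mul_apply,
    prod_mul_distrib]
  refine sum_congr rfl fun k _ => sum_congr rfl fun c hc => ?_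
  obtain ⟨hmax, hv⟩ := (mem_filter.1 hc).2
  rw [hs k c hmax hv]

theorem atog_mul_of_prod_eq (C : ℝ) {s f : P → ℝ} {v : P} {κ : ℝ}
    (hs : ∀ k (c : Fin (k + 1) → P), MaxChain c → (∃ j, c j = v) → ∏ i, s (c i) = κ) :
    atog C v (s * f) = Function.update s v κ⁻¹ * atog C v f := by
  funext x
  by_cases hx : x = v
  · subst hx
    simp only [atog, if_pos, Pi.mul_apply, Function.update_self, Upsilon_mul_of_prod_eq hs]
    ring
  · simp [atog, hx]

noncomputable def shiftedWeights (a : ℕ → ℝ) (r : ℕ) (j : ℕ) : ℝ :=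
  if j = 0 then (∏ i ∈ range (r + 1), a i)⁻¹ else a (j - 1)

theorem prod_ite_lt_shiftedWeights {a : ℕ → ℝ} (ha : ∀ j, a j ≠ 0) {r : ℕ} :
    ∀ k ≤ r, ∏ j ∈ range (r + 1), (if j < k then shiftedWeights a r j else a j)
      = (shiftedWeights a r k)⁻¹
  | 0, _ => by simp [shiftedWeights]
  | k + 1, hk => by
    have hb : shiftedWeights a r k ≠ 0 := by
      unfold shiftedWeights
      split_ifs
      exacts [inv_ne_zero (prod_ne_zero_iff.2 fun i _ => ha i), ha _]
    have hsplit : ∀ j, (if j < k + 1 then shiftedWeights a r j else a j)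
        = (if j < k then shiftedWeights a r j else a j)
          * if j = k then shiftedWeights a r k / a k else 1 := by
      intro j
      rcases lt_trichotomy j k with h | rfl | h
      · simp [h, h.ne, Nat.lt_succ_of_lt h]
      · simp [mul_div_cancel₀ _ (ha j)]
      · simp [h.ne', h.not_gt, show ¬j < k + 1 by omega]
    rw [prod_congr rfl fun j _ => hsplit j, prod_mul_distrib, prod_ite_lt_shiftedWeights ha k
      (by omega), prod_ite_eq', if_pos (mem_range.2 (by omega)), div_eq_mul_inv,
      inv_mul_cancel_left₀ hb]
    simp [shiftedWeights]

theorem IsLinearExtension.pairwise {P : Type*} [PartialOrder P] {l : List P}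
    (hl : IsLinearExtension l) : l.Pairwise fun x y => ¬ y < x :=
  List.pairwise_iff_getElem.2 fun i j hi hj hij hlt => (hl.2.2 j i hj hi hlt).not_gt hij

theorem IsLinearExtension.mem_of_lt {P : Type*} [PartialOrder P] {l₁ l₂ : List P} {v y : P}
    (hl : IsLinearExtension (l₁ ++ v :: l₂)) (hy : y < v) : y ∈ l₁ := by
  have hp := hl.pairwise
  rw [List.pairwise_append, List.pairwise_cons] at hp
  rcases List.mem_append.1 (hl.2.1 y) with h | h
  · exact h
  rcases List.mem_cons.1 h with rfl | h
  · exact absurd hy (lt_irrefl y)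
  · exact absurd hy (hp.2.1.1 y h)

theorem IsLinearExtension.notMem_of_le {P : Type*} [PartialOrder P] {l₁ l₂ : List P}
    {v y : P} (hl : IsLinearExtension (l₁ ++ v :: l₂)) (hy : v ≤ y) : y ∉ l₁ := by
  intro hy₁
  rcases hy.lt_or_eq with hlt | rfl
  · have hp := hl.pairwise
    rw [List.pairwise_append] at hp
    exact hp.2.2 y hy₁ v List.mem_cons_self hlt
  · exact (List.nodup_append.1 hl.1).2.2 v hy₁ v List.mem_cons_self rfl

noncomputable def prefixWeights {P : Type*} (rk : P → ℕ) (a b : ℕ → ℝ) (l : List P) (x : P) :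
    ℝ :=
  if x ∈ l then b (rk x) else a (rk x)

theorem MaxChain.prod_prefixWeights {P : Type*} [PartialOrder P] {rk : P → ℕ} {r k : ℕ}
    (hrk : IsRankFunction rk r) {c : Fin (k + 1) → P} (hc : MaxChain c) {j : Fin (k + 1)}
    {l₁ l₂ : List P} {v : P} (hj : c j = v) (hl : IsLinearExtension (l₁ ++ v :: l₂))
    (a b : ℕ → ℝ) :
    ∏ i, prefixWeights rk a b l₁ (c i)
      = ∏ n ∈ range (r + 1), if n < rk v then b n else a n := by
  rw [← hc.prod_comp_rk hrk fun n => if n < rk v then b n else a n]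
  refine prod_congr rfl fun i _ => ?_
  have hrkv : rk v = j := hj ▸ hc.rk_apply hrk j
  rw [prefixWeights, hrkv, hc.rk_apply hrk i]
  rcases lt_or_ge i j with hij | hji
  · rw [if_pos (hl.mem_of_lt (hj ▸ hc.1.strictMono hij)), if_pos (Fin.lt_def.1 hij)]
  · rw [if_neg (hl.notMem_of_le (hj ▸ hc.1.strictMono.monotone hji)),
      if_neg (Fin.le_def.1 hji).not_gt]

theorem atog_prefixWeights (C : ℝ) {rk : P → ℕ} {r : ℕ} (hrk : IsRankFunction rk r)
    {a : ℕ → ℝ} (ha : ∀ j, a j ≠ 0) {l₁ l₂ : List P} {v : P}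
    (hl : IsLinearExtension (l₁ ++ v :: l₂)) (f : P → ℝ) :
    atog C v (prefixWeights rk a (shiftedWeights a r) l₁ * f)
      = prefixWeights rk a (shiftedWeights a r) (l₁ ++ [v]) * atog C v f := by
  rw [atog_mul_of_prod_eq C (κ := (shiftedWeights a r (rk v))⁻¹), inv_inv]
  · congr 1
    funext x
    by_cases hx : x = v <;> simp [prefixWeights, hx]
  · rintro k c hc ⟨j, hj⟩
    have hrkv : rk v ≤ r := by
      rw [← hj, hc.rk_apply hrk, ← hc.length_eq hrk]
      exact Fin.is_le j
    rw [hc.prod_prefixWeights hrk hj hl, prod_ite_lt_shiftedWeights ha _ hrkv]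

theorem applyATogs_cons (C : ℝ) (v : P) (l : List P) (g : P → ℝ) :
    applyATogs C (v :: l) g = applyATogs C l (atog C v g) :=
  rfl

theorem applyATogs_prefixWeights (C : ℝ) {rk : P → ℕ} {r : ℕ} (hrk : IsRankFunction rk r)
    {a : ℕ → ℝ} (ha : ∀ j, a j ≠ 0) :
    ∀ (l₂ l₁ : List P), IsLinearExtension (l₁ ++ l₂) → ∀ f : P → ℝ,
      applyATogs C l₂ (prefixWeights rk a (shiftedWeights a r) l₁ * f)
        = prefixWeights rk a (shiftedWeights a r) (l₁ ++ l₂) * applyATogs C l₂ f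
  | [], _, _, _ => by simp [applyATogs]
  | v :: l₂, l₁, hl, f => by
    rw [applyATogs_cons, applyATogs_cons, atog_prefixWeights C hrk ha hl,
      applyATogs_prefixWeights C hrk ha l₂ (l₁ ++ [v]) (by simpa using hl), List.append_assoc,
      List.singleton_append]

theorem BAR_graded_rescaling_general (C : ℝ)
    (rk : P → ℕ) (r : ℕ) (hrk : IsRankFunction rk r)
    (l : List P) (hl : IsLinearExtension l)
    (a : ℕ → ℝ) (ha : ∀ j, 0 < a j)
    (g : P → ℝ) :
    applyATogs C l (fun x => a (rk x) * g x)
      = fun x =>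
          (if rk x = 0 then (∏ j ∈ range (r + 1), a j)⁻¹ else a (rk x - 1))
            * applyATogs C l g x := by
  have h := applyATogs_prefixWeights C hrk (fun j => (ha j).ne') l [] (by simpa using hl) g
  simpa [Pi.mul_def, prefixWeights, shiftedWeights, hl.2.1] using h

/-- Let `P` be a finite graded poset of rank `r`, `g` a positive
labeling and `a₀,…,a_r` positive reals.  Then
`BAR((a₀, a₁, …, a_r) ♭ g) = (1/(a₀a₁⋯a_r), a₀, a₁, …, a_{r-2}, a_{r-1}) ♭ BAR(g)`,
where `(a₀,…,a_r) ♭ g` multiplies the label of each element of rank `j` by `a_j`, and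
`BAR = τ_{xₙ} ∘ ⋯ ∘ τ_{x₂} ∘ τ_{x₁}` for any linear extension `(x₁,…,xₙ)` of `P`. -/
theorem BAR_graded_rescaling (C : ℝ) (hC : 0 < C)
    (rk : P → ℕ) (r : ℕ) (hrk : IsRankFunction rk r)
    (l : List P) (hl : IsLinearExtension l)
    (a : ℕ → ℝ) (ha : ∀ j, 0 < a j)
    (g : P → ℝ) (hg : ∀ x, 0 < g x) :
    applyATogs C l (fun x => a (rk x) * g x)
      = fun x =>
          (if rk x = 0 then (∏ j ∈ range (r + 1), a j)⁻¹ else a (rk x - 1))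
            * applyATogs C l g x :=
  BAR_graded_rescaling_general C rk r hrk l hl a ha g
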